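/- arXiv:2212.03622 — 4 statements merged into one kernel-verified Lean document; each statement's English description precedes it below -/
import Mathlib

section
/- For a connected graph G with n vertices and m edges, the spectral radius (largest eigenvalue of the adjacency matrix) satisfies ρ(G) ≤ √(2m − n + 1). -/
open scoped Classical

/-- The adjacency matrix of a simple graph is Hermitian over `ℝ`. -/
theorem adjMatrix_isHermitian {n : ℕ} (G : SimpleGraph (Fin n)) :
    (G.adjMatrix ℝ).IsHermitian := by
  unfold Matrix.IsHermitian
  rw [Matrix.conjTranspose_eq_transpose_of_trivial]
  exact G.isSymm_adjMatrix

/-- The spectral radius of a graph: the largest eigenvalue of its adjacency matrix. -/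
noncomputable def specRad {n : ℕ} (G : SimpleGraph (Fin n)) : ℝ :=
  ⨆ i, (adjMatrix_isHermitian G).eigenvalues i

/-!
If `x` is an eigenvector of the adjacency matrix `A` for its largest eigenvalue `ρ`, then
`A² x = ρ² x`, so by Gershgorin's theorem `ρ²` is at most the largest row sum of the nonnegative
matrix `A²`. The row sum of `A²` at `u` is the sum of the degrees of the neighbours of `u`, and in
a connected graph this is at most `2m - (n - 1)`: the degrees of the vertices outside `N(u)` add up
to at least `d(u) + (n - 1 - d(u))`, since each of them other than `u` has a neighbour.
-/

open Finset Matrix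

theorem Matrix.le_of_mulVec_eq_smul_of_sum_row_le {ι : Type*} [Fintype ι] {M : Matrix ι ι ℝ}
    (hM : ∀ i j, 0 ≤ M i j) {μ c : ℝ} {x : ι → ℝ} (hx : x ≠ 0) (hMx : M *ᵥ x = μ • x)
    (hc : ∀ i, ∑ j, M i j ≤ c) : μ ≤ c := by
  classical
  have hμ : Module.End.HasEigenvalue (toLin' M) μ :=
    Module.End.hasEigenvalue_of_hasEigenvector
      ⟨Module.End.mem_eigenspace_iff.2 (by simpa using hMx), hx⟩
  obtain ⟨k, hk⟩ := eigenvalue_mem_ball hμ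
  rw [Metric.mem_closedBall, Real.dist_eq] at hk
  simp only [Real.norm_of_nonneg (hM k _)] at hk
  linarith [le_abs_self (μ - M k k), hc k, Finset.add_sum_erase univ (M k) (mem_univ k)]

namespace SimpleGraph

variable {V : Type*} [Fintype V] [DecidableEq V]

theorem sum_adjMatrix_sq_apply (G : SimpleGraph V) [DecidableRel G.Adj] {R : Type*} [Semiring R]
    (u : V) :
    ∑ v, (G.adjMatrix R ^ 2) u v = ∑ v ∈ G.neighborFinset u, (G.degree v : R) := by
  calc ∑ v, (G.adjMatrix R ^ 2) u v = (G.adjMatrix R ^ 2 *ᵥ Function.const V 1) u := by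
        simp [mulVec, dotProduct]
    _ = (G.adjMatrix R *ᵥ (G.adjMatrix R *ᵥ Function.const V 1)) u := by
        rw [sq, mulVec_mulVec]
    _ = ∑ v ∈ G.neighborFinset u, (G.degree v : R) := by
        simp only [adjMatrix_mulVec_apply, Function.const_apply, sum_const,
          card_neighborFinset_eq_degree, nsmul_one]

theorem Preconnected.sum_degree_neighborFinset_add_card_le {G : SimpleGraph V} [DecidableRel G.Adj]
    (hG : G.Preconnected) (u : V) :
    ∑ v ∈ G.neighborFinset u, G.degree v + Fintype.card V ≤ 2 * #G.edgeFinset + 1 := by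
  set N := G.neighborFinset u
  have hu : u ∈ Nᶜ := by simp [N]
  have hfar : #((Nᶜ).erase u) ≤ ∑ v ∈ (Nᶜ).erase u, G.degree v :=
    (card_eq_sum_ones _).trans_le <|
      sum_le_sum fun v hv => (hG v u).degree_pos_left (ne_of_mem_erase hv)
  have hcard : #((Nᶜ).erase u) + G.degree u + 1 = Fintype.card V := by
    rw [card_erase_of_mem hu, card_compl, card_neighborFinset_eq_degree]
    have := G.degree_lt_card_verts u
    omega
  have hsplit : ∑ v ∈ N, G.degree v + (G.degree u + ∑ v ∈ (Nᶜ).erase u, G.degree v)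
      = 2 * #G.edgeFinset := by
    rw [add_sum_erase _ (fun v => G.degree v) hu, sum_add_sum_compl,
      sum_degrees_eq_twice_card_edges]
  omega

end SimpleGraph

theorem stmt0 {n : ℕ} (G : SimpleGraph (Fin n)) (hG : G.Connected) :
    specRad G ≤ Real.sqrt (2 * G.edgeSet.ncard - n + 1) := by
  set hA := adjMatrix_isHermitian G
  have : Nonempty (Fin n) := hG.nonempty
  obtain ⟨i, hi⟩ := exists_eq_ciSup_of_finite (f := hA.eigenvalues)
  set ρ := hA.eigenvalues i
  set x : Fin n → ℝ := ⇑(hA.eigenvectorBasis i)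
  have hx : x ≠ 0 := by
    simpa [x] using hA.eigenvectorBasis.orthonormal.ne_zero i
  have hAx : G.adjMatrix ℝ *ᵥ x = ρ • x := hA.mulVec_eigenvectorBasis i
  have hA2x : G.adjMatrix ℝ ^ 2 *ᵥ x = ρ ^ 2 • x := by
    rw [sq, ← mulVec_mulVec, hAx, mulVec_smul, hAx, smul_smul, sq]
  have hA2 : ∀ u v, 0 ≤ (G.adjMatrix ℝ ^ 2) u v := fun u v => by
    rw [G.adjMatrix_pow_apply_eq_card_walk]
    exact Nat.cast_nonneg _
  have hrow : ∀ u, ∑ v, (G.adjMatrix ℝ ^ 2) u v ≤ 2 * G.edgeSet.ncard - n + 1 := fun u => by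
    have h : ∑ v ∈ G.neighborFinset u, (G.degree v : ℝ) + n ≤ 2 * #G.edgeFinset + 1 := by
      exact_mod_cast Fintype.card_fin n ▸ hG.preconnected.sum_degree_neighborFinset_add_card_le u
    rw [G.sum_adjMatrix_sq_apply, ← G.coe_edgeFinset, Set.ncard_coe_finset]
    linarith
  rw [specRad, ← hi]
  exact Real.le_sqrt_of_sq_le (le_of_mulVec_eq_smul_of_sum_row_le hA2 hx hA2x hrow)
end

section
/- Let a, b, n be positive integers with b ≥ a and n ≥ 3b(b+1)/a + 3b + 7. Then the spectral radius of the join K_{⌈(2b²+2b)/a⌉+2b−4} ∇ (K₂ ∪ K_{n−⌈(2b²+2b)/a⌉−2b+2}) is strictly less than n − 2. -/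
open scoped Classical

/-- The graph `K_c ∇ (K₂ ∪ K_{n-c-2})` on `Fin n`: the first `c` vertices form a
dominating clique, the next two vertices form a `K₂`, and the remaining vertices
form a clique `K_{n-c-2}`. -/
def joinGraph (n c : ℕ) : SimpleGraph (Fin n) where
  Adj u v := u ≠ v ∧ ((u : ℕ) < c ∨ (v : ℕ) < c ∨ (((u : ℕ) < c + 2) ↔ ((v : ℕ) < c + 2)))
  symm := ⟨by
    rintro u v ⟨h1, h2⟩
    exact ⟨h1.symm, by tauto⟩⟩
  loopless := ⟨fun u h => h.1 rfl⟩

/-- The graph `H_{n,b} = K_{b-1} ∇ (K₁ ∪ K_{n-b})` on `Fin n`: the complete graph on the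
vertices `1, …, n-1` together with the vertex `0` joined precisely to `1, …, b-1`. -/
def Hgraph (n b : ℕ) : SimpleGraph (Fin n) where
  Adj u v := u ≠ v ∧ ¬((u : ℕ) = 0 ∧ b ≤ (v : ℕ)) ∧ ¬((v : ℕ) = 0 ∧ b ≤ (u : ℕ))
  symm := ⟨by
    rintro u v ⟨h1, h2, h3⟩
    exact ⟨h1.symm, h3, h2⟩⟩
  loopless := ⟨fun u h => h.1 rfl⟩

/-! The vertex set splits into the dominating clique `C` (size `c`), the `K₂` part `E` and the
remaining clique `R` (size `m = n - c - 2`), and `joinGraph n c` is the complete graph with the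
`E`–`R` edges removed. Writing `r, p, q` for the sums of a vector `x` over `C, E, R`, its
quadratic form is `(r + p + q)² - ‖x‖² - 2pq`. Cauchy–Schwarz on each block bounds `‖x‖²` from
below by `r²/c + p²/2 + q²/m`, so `xᵀAx < (n - 2)‖x‖²` reduces to the positive definiteness of a
ternary quadratic form in `r, p, q`; by Sylvester's criterion this is exactly the inequality
`2c(c + 1) < (n - 1)(n - 3)`, which the bound on `n` guarantees. -/

open Finset Matrix

section OrderedField

variable {𝕜 : Type*} [Field 𝕜] [LinearOrder 𝕜] [IsStrictOrderedRing 𝕜]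

lemma quadForm_pos_of_leadingMinors_pos {α β γ r p q : 𝕜} (hα : 0 < α) (hαβ : 1 < α * β)
    (hαβγ : β + γ < α * β * γ) (hrpq : r ≠ 0 ∨ p ≠ 0 ∨ q ≠ 0) :
    0 < α * r ^ 2 + β * p ^ 2 + γ * q ^ 2 - 2 * r * p - 2 * r * q := by
  have hδ : 0 < α * β - 1 := by linarith
  have hε : 0 < α * (α * β * γ - β - γ) := mul_pos hα (by linarith)
  have sos : α * (α * β - 1) * (α * r ^ 2 + β * p ^ 2 + γ * q ^ 2 - 2 * r * p - 2 * r * q)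
      = (α * β - 1) * (α * r - p - q) ^ 2 + ((α * β - 1) * p - q) ^ 2
        + α * (α * β * γ - β - γ) * q ^ 2 := by ring
  refine pos_of_mul_pos_right (sos ▸ ?_) (mul_pos hα hδ).le
  by_contra! hle
  have h1 : 0 ≤ (α * β - 1) * (α * r - p - q) ^ 2 := by positivity
  have h2 := sq_nonneg ((α * β - 1) * p - q)
  have h3 : 0 ≤ α * (α * β * γ - β - γ) * q ^ 2 := by positivity
  have hq : q = 0 := by simpa [hε.ne'] using le_antisymm (by linarith) h3
  have hp : p = 0 := by simpa [hq, hδ.ne'] using le_antisymm (by linarith) h2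
  have hr : r = 0 := by simpa [hp, hq, hδ.ne', hα.ne'] using le_antisymm (by linarith) h1
  tauto

lemma sq_add_add_sub_two_mul_lt {c m r p q s t u : 𝕜} (hc : 0 < c) (hm : 0 < m)
    (hcm : 2 * c * (c + 1) < (c + m + 1) * (c + m - 1))
    (hr : r ^ 2 ≤ c * s) (hp : p ^ 2 ≤ 2 * t) (hq : q ^ 2 ≤ m * u) (hstu : 0 < s + t + u) :
    (r + p + q) ^ 2 - 2 * (p * q) < (c + m + 1) * (s + t + u) := by
  have hN : 0 < c + m + 1 := by linarith
  by_cases h0 : r = 0 ∧ p = 0 ∧ q = 0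
  · obtain ⟨rfl, rfl, rfl⟩ := h0
    simpa using mul_pos hN hstu
  have weighted {k w z : 𝕜} (hk : 0 < k) (h : w ^ 2 ≤ k * z) :
      (c + m + 1) / k * w ^ 2 ≤ (c + m + 1) * z :=
    calc (c + m + 1) / k * w ^ 2 ≤ (c + m + 1) / k * (k * z) := by gcongr
      _ = (c + m + 1) * z := by field_simp
  have hm1 : 1 < m := by nlinarith
  -- `α + 1, β + 1, γ + 1` are the Cauchy–Schwarz weights `(c + m + 1) / c, … / 2, … / m`;
  -- the determinant condition `β + γ < αβγ` clears to `hcm`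
  have hF := quadForm_pos_of_leadingMinors_pos (α := (m + 1) / c) (β := (c + m - 1) / 2)
    (γ := (c + 1) / m) (r := r) (p := p) (q := q) (by positivity)
    (by rw [div_mul_div_comm, one_lt_div (by positivity)]; nlinarith)
    (by rw [div_add_div _ _ two_ne_zero hm.ne', div_mul_div_comm, div_mul_div_comm,
          div_lt_div_iff₀ (by positivity) (by positivity)]; nlinarith [mul_pos hc hm])
    (by tauto)
  have e1 : (m + 1) / c + 1 = (c + m + 1) / c := by field_simp; ring
  have e2 : (c + m - 1) / 2 + 1 = (c + m + 1) / 2 := by ring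
  have e3 : (c + 1) / m + 1 = (c + m + 1) / m := by field_simp; ring
  have hr' := e1 ▸ weighted hc hr
  have hp' := e2 ▸ weighted two_pos hp
  have hq' := e3 ▸ weighted hm hq
  linarith

end OrderedField

lemma dotProduct_self_pos {ι : Type*} [Fintype ι] {x : ι → ℝ} (hx : x ≠ 0) : 0 < x ⬝ᵥ x := by
  simpa using dotProduct_star_self_pos_iff.2 hx

lemma dotProduct_indicator_one {ι : Type*} [Fintype ι] (s : Finset ι) (x : ι → ℝ) :
    x ⬝ᵥ (s : Set ι).indicator 1 = ∑ u ∈ s, x u := by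
  simp [dotProduct, Set.indicator_apply]

lemma specRad_lt_of_forall_dotProduct_lt {n : ℕ} [NeZero n] (G : SimpleGraph (Fin n)) (μ : ℝ)
    (h : ∀ x : Fin n → ℝ, x ≠ 0 → x ⬝ᵥ (G.adjMatrix ℝ *ᵥ x) < μ * (x ⬝ᵥ x)) :
    specRad G < μ := by
  set hA := adjMatrix_isHermitian G
  obtain ⟨j, hj⟩ := exists_eq_ciSup_of_finite (f := hA.eigenvalues)
  set v : Fin n → ℝ := ⇑(hA.eigenvectorBasis j)
  have hv : v ≠ 0 := fun h0 =>
    hA.eigenvectorBasis.orthonormal.ne_zero j (by ext i; exact congrFun h0 i)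
  have hRay := h v hv
  rw [hA.mulVec_eigenvectorBasis j, dotProduct_smul, smul_eq_mul] at hRay
  rw [specRad, ← hj]
  exact lt_of_mul_lt_mul_right hRay (dotProduct_self_pos hv).le

def finIio (n k : ℕ) : Finset (Fin n) := {u | (u : ℕ) < k}

@[simp] lemma mem_finIio {n k : ℕ} {u : Fin n} : u ∈ finIio n k ↔ (u : ℕ) < k := by
  simp [finIio]

lemma card_finIio (n k : ℕ) : #(finIio n k) = min n k := Fin.card_filter_val_lt

lemma finIio_mono {n k l : ℕ} (h : k ≤ l) : finIio n k ⊆ finIio n l := by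
  intro u; simp only [mem_finIio]; omega

namespace joinGraph

def edgePart (n c : ℕ) : Finset (Fin n) := finIio n (c + 2) \ finIio n c

def restPart (n c : ℕ) : Finset (Fin n) := (finIio n (c + 2))ᶜ

lemma adjMatrix_eq (n c : ℕ) :
    (joinGraph n c).adjMatrix ℝ = vecMulVec 1 1 - 1 -
      (vecMulVec (Set.indicator ↑(edgePart n c) 1) (Set.indicator ↑(restPart n c) 1) +
        vecMulVec (Set.indicator ↑(restPart n c) 1) (Set.indicator ↑(edgePart n c) 1)) := by
  ext u w
  simp only [joinGraph, Matrix.sub_apply, Matrix.add_apply, vecMulVec_apply, one_apply,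
    Set.indicator_apply]
  simp [edgePart, restPart, Fin.ext_iff, iff_iff_and_or_not_and_not]
  split_ifs <;> first | omega | norm_num

lemma dotProduct_adjMatrix_mulVec (n c : ℕ) (x : Fin n → ℝ) :
    x ⬝ᵥ ((joinGraph n c).adjMatrix ℝ *ᵥ x) = (∑ u, x u) ^ 2 - ∑ u, x u ^ 2
      - 2 * ((∑ u ∈ edgePart n c, x u) * ∑ u ∈ restPart n c, x u) := by
  rw [adjMatrix_eq]
  simp only [sub_mulVec, add_mulVec, vecMulVec_mulVec, one_mulVec, dotProduct_sub,
    dotProduct_add, dotProduct_smul, op_smul_eq_mul, dotProduct_comm _ x,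
    dotProduct_indicator_one, dotProduct_one]
  simp only [dotProduct, ← sq]
  ring

lemma dotProduct_adjMatrix_mulVec_lt {n c : ℕ} (hc : 0 < c) (hcn : c + 2 < n)
    (hdet : 2 * (c : ℝ) * (c + 1) < (n - 1) * (n - 3)) {x : Fin n → ℝ} (hx : x ≠ 0) :
    x ⬝ᵥ ((joinGraph n c).adjMatrix ℝ *ᵥ x) < (n - 2) * (x ⬝ᵥ x) := by
  have hc2 : c ≤ c + 2 := Nat.le_add_right c 2
  have split (f : Fin n → ℝ) :
      ∑ u, f u = ∑ u ∈ finIio n c, f u + ∑ u ∈ edgePart n c, f u + ∑ u ∈ restPart n c, f u := by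
    rw [edgePart, restPart, ← sum_add_sum_compl (finIio n (c + 2)), ← sum_sdiff (finIio_mono hc2)]
    ring
  have hC : (#(finIio n c) : ℝ) = c := by simp [card_finIio, hcn.le.trans' hc2]
  have hE : (#(edgePart n c) : ℝ) = 2 := by
    rw [edgePart, card_sdiff_of_subset (finIio_mono hc2), card_finIio, card_finIio,
      min_eq_right hcn.le, min_eq_right (hcn.le.trans' hc2)]
    norm_num
  have hR : (#(restPart n c) : ℝ) = n - c - 2 := by
    rw [restPart, card_compl, card_finIio, Fintype.card_fin, min_eq_right hcn.le,
      Nat.cast_sub hcn.le]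
    push_cast; ring
  have hxx : x ⬝ᵥ x = ∑ u, x u ^ 2 := by simp only [dotProduct, sq]
  have key := sq_add_add_sub_two_mul_lt (c := (c : ℝ)) (m := n - c - 2) (by exact_mod_cast hc)
    (by rw [sub_sub, sub_pos]; exact_mod_cast hcn) (hdet.trans_eq (by ring))
    (hC ▸ sq_sum_le_card_mul_sum_sq) (hE ▸ sq_sum_le_card_mul_sum_sq)
    (hR ▸ sq_sum_le_card_mul_sum_sq) (by rw [← split, ← hxx]; exact dotProduct_self_pos hx)
  rw [dotProduct_adjMatrix_mulVec, hxx, split x, split (fun u => x u ^ 2)]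
  linarith

end joinGraph

lemma natCast_add_sub_one_div_le (k : ℕ) {a : ℕ} (ha : 0 < a) :
    (((k + a - 1) / a : ℕ) : ℝ) ≤ k / a + 1 :=
  calc (((k + a - 1) / a : ℕ) : ℝ) ≤ ((k + a - 1 : ℕ) : ℝ) / a := Nat.cast_div_le
    _ ≤ (k + a) / a := by gcongr; exact_mod_cast Nat.sub_le _ _
    _ = k / a + 1 := by field_simp

lemma le_add_sub_one_div_of_mul_le {m k a : ℕ} (ha : 0 < a) (h : m * a ≤ k) :
    m ≤ (k + a - 1) / a :=
  (Nat.le_div_iff_mul_le ha).2 (by omega)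

theorem stmt3 (a b n : ℕ) (ha : 0 < a) (hab : a ≤ b)
    (hn : (3 * b * (b + 1) : ℝ) / a + 3 * b + 7 ≤ n) :
    specRad (joinGraph n ((2 * b ^ 2 + 2 * b + a - 1) / a + 2 * b - 4)) < (n : ℝ) - 2 := by
  set d := (2 * b ^ 2 + 2 * b + a - 1) / a
  set T : ℝ := 2 * b * (b + 1) / a
  have hd : 2 * b + 2 ≤ d := le_add_sub_one_div_of_mul_le ha (by nlinarith)
  have hdT : (d : ℝ) ≤ T + 1 := by
    convert natCast_add_sub_one_div_le (2 * b ^ 2 + 2 * b) ha using 2; push_cast; ring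
  have hnT : 3 / 2 * T + 3 * b + 7 ≤ n := by convert hn using 2; ring
  have hT : 0 ≤ T := by positivity
  have hc : ((d + 2 * b - 4 : ℕ) : ℝ) = d + 2 * b - 4 := by
    rw [Nat.cast_sub (by omega)]; push_cast; ring
  have hcn : d + 2 * b - 4 + 2 < n := by
    have : ((d + 2 * b - 4 : ℕ) : ℝ) + 2 < n := by linarith
    exact_mod_cast this
  have : NeZero n := ⟨by omega⟩
  refine specRad_lt_of_forall_dotProduct_lt _ _ fun x hx => ?_
  refine joinGraph.dotProduct_adjMatrix_mulVec_lt (by omega) hcn ?_ hx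
  rw [hc]
  -- with `X = T + 2b`: `c ≤ X - 3` and `n ≥ 3X/2 + 7`
  nlinarith
end

section
/- For integers n and r with 2 ≤ r ≤ n − 3, the spectral radius of the graph K₁ ∇ (K_r ∪ K_{n−1−r}) is strictly less than n − 2. -/
open scoped Classical

/-- The graph `K₁ ∇ (K_r ∪ K_{n-1-r})` on `Fin n`: vertex `0` is joined to everything,
the vertices `1, …, r` form a clique, and the vertices `r+1, …, n-1` form a clique. -/
def oneJoin (n r : ℕ) : SimpleGraph (Fin n) where
  Adj u v := u ≠ v ∧ ((u : ℕ) = 0 ∨ (v : ℕ) = 0 ∨ (((u : ℕ) ≤ r) ↔ ((v : ℕ) ≤ r)))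
  symm := ⟨by
    rintro u v ⟨h1, h2⟩
    exact ⟨h1.symm, by tauto⟩⟩
  loopless := ⟨fun u h => h.1 rfl⟩

/-!
A nonnegative matrix `A` with a positive vector `w` satisfying `A w < c w` entrywise has all real
eigenvalues of absolute value `< c`: at a coordinate maximising `|x i| / w i` the eigen-equation
gives `|μ| |x i| ≤ (|x i| / w i) (A w) i < c |x i|`. For `K₁ ∇ (K_r ∪ K_{n-1-r})` take weight `3`
on the hub and `2` elsewhere: the weighted row sums are `2(n-1)`, `2r+1` and `2(n-1-r)+1`, all
below `n - 2` times the weight when `2 ≤ r ≤ n - 3`.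
-/

open Finset Matrix

theorem Matrix.abs_lt_of_mulVec_eq_smul_of_mulVec_lt {ι : Type*} [Fintype ι]
    {A : Matrix ι ι ℝ} (hA : ∀ i j, 0 ≤ A i j) {w : ι → ℝ} (hw : ∀ i, 0 < w i) {c : ℝ}
    (hAw : ∀ i, (A *ᵥ w) i < c * w i) {x : ι → ℝ} (hx : x ≠ 0) {μ : ℝ}
    (hμ : A *ᵥ x = μ • x) : |μ| < c := by
  obtain ⟨j, hj⟩ := Function.ne_iff.mp hx
  have : Nonempty ι := ⟨j⟩
  obtain ⟨i, hi⟩ := Finite.exists_max fun k => |x k| / w k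
  set m := |x i| / w i
  have hxw : ∀ k, |x k| ≤ m * w k := fun k => (div_le_iff₀ (hw k)).mp (hi k)
  have hxi : 0 < |x i| := by
    have := (div_pos (abs_pos.mpr hj) (hw j)).trans_le (hi j)
    exact (div_pos_iff_of_pos_right (hw i)).mp this
  have hm : 0 < m := div_pos hxi (hw i)
  refine lt_of_mul_lt_mul_right ?_ hxi.le
  calc |μ| * |x i| = |∑ k, A i k * x k| := by
        rw [← abs_mul, ← smul_eq_mul, ← Pi.smul_apply, ← hμ]; rfl
    _ ≤ ∑ k, A i k * (m * w k) := by
        refine (abs_sum_le_sum_abs _ _).trans (sum_le_sum fun k _ => ?_)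
        rw [abs_mul, abs_of_nonneg (hA i k)]
        exact mul_le_mul_of_nonneg_left (hxw k) (hA i k)
    _ = m * (A *ᵥ w) i := by
        rw [mulVec, dotProduct, mul_sum]; exact sum_congr rfl fun k _ => mul_left_comm _ _ _
    _ < m * (c * w i) := mul_lt_mul_of_pos_left (hAw i) hm
    _ = c * |x i| := by simp only [m]; field_simp [(hw i).ne']

theorem specRad_lt_of_adjMatrix_mulVec_lt {n : ℕ} [NeZero n] (G : SimpleGraph (Fin n))
    {w : Fin n → ℝ} (hw : ∀ i, 0 < w i) {c : ℝ}
    (hGw : ∀ i, (G.adjMatrix ℝ *ᵥ w) i < c * w i) : specRad G < c := by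
  set hA := adjMatrix_isHermitian G
  obtain ⟨i, hi⟩ := exists_eq_ciSup_of_finite (f := hA.eigenvalues)
  rw [specRad, ← hi]
  have hv : ⇑(hA.eigenvectorBasis i) ≠ 0 := fun h =>
    hA.eigenvectorBasis.orthonormal.ne_zero i (by ext k; exact congrFun h k)
  exact (le_abs_self _).trans_lt <| abs_lt_of_mulVec_eq_smul_of_mulVec_lt
    (fun _ _ => by simp only [SimpleGraph.adjMatrix_apply]; split_ifs <;> norm_num)
    hw hGw hv (hA.mulVec_eigenvectorBasis i)

namespace oneJoin
variable {n r : ℕ}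

noncomputable def weight (n : ℕ) [NeZero n] : Fin n → ℝ :=
  Function.const _ 2 + Pi.single 0 1

theorem weight_pos [NeZero n] (u : Fin n) : 0 < weight n u := by
  simp only [weight, Pi.add_apply, Function.const_apply, Pi.single_apply]
  split_ifs <;> norm_num

theorem adj_zero [NeZero n] {u : Fin n} : (oneJoin n r).Adj u 0 ↔ u ≠ 0 := by
  simp [oneJoin]

theorem degree_zero [NeZero n] : (oneJoin n r).degree 0 = n - 1 := by
  have : (oneJoin n r).neighborFinset 0 = univ.erase 0 := by
    ext v; rw [SimpleGraph.mem_neighborFinset]; simp [oneJoin, eq_comm]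
  rw [← SimpleGraph.card_neighborFinset_eq_degree, this, card_erase_of_mem (mem_univ _),
    card_univ, Fintype.card_fin]

theorem degree_of_le (hr : r < n) {u : Fin n} (hu0 : (u : ℕ) ≠ 0) (hur : (u : ℕ) ≤ r) :
    (oneJoin n r).degree u = r := by
  have : (oneJoin n r).neighborFinset u = (Iic ⟨r, hr⟩).erase u := by
    ext v; rw [SimpleGraph.mem_neighborFinset]
    simp only [oneJoin, mem_erase, mem_Iic, Fin.le_def, ne_eq, Fin.ext_iff]
    omega
  rw [← SimpleGraph.card_neighborFinset_eq_degree, this,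
    card_erase_of_mem (mem_Iic.mpr (Fin.le_def.mpr hur)), Fin.card_Iic]
  rfl

theorem degree_of_lt [NeZero n] {u : Fin n} (hru : r < u) :
    (oneJoin n r).degree u = n - 1 - r := by
  have hr : r < n := hru.trans u.isLt
  have : (oneJoin n r).neighborFinset u = (insert 0 (Ioi ⟨r, hr⟩)).erase u := by
    ext v; rw [SimpleGraph.mem_neighborFinset]
    simp only [oneJoin, mem_erase, mem_insert, mem_Ioi, Fin.lt_def, ne_eq, Fin.ext_iff,
      Fin.val_zero]
    omega
  rw [← SimpleGraph.card_neighborFinset_eq_degree, this,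
    card_erase_of_mem (mem_insert_of_mem (mem_Ioi.mpr (Fin.lt_def.mpr hru))),
    card_insert_of_notMem (by simp), Fin.card_Ioi]
  rfl

theorem adjMatrix_mulVec_lt [NeZero n] (hr : 2 ≤ r) (hrn : r + 3 ≤ n) (u : Fin n) :
    ((oneJoin n r).adjMatrix ℝ *ᵥ weight n) u < (n - 2 : ℝ) * weight n u := by
  rw [weight, mulVec_add, Pi.add_apply, SimpleGraph.adjMatrix_mulVec_const_apply,
    mulVec_single_one, col_apply, SimpleGraph.adjMatrix_apply, adj_zero]
  have hr' : (2 : ℝ) ≤ r := by exact_mod_cast hr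
  have hrn' : (r + 3 : ℝ) ≤ n := by exact_mod_cast hrn
  by_cases hu : u = 0
  · subst hu
    simp only [degree_zero, ne_eq, not_true_eq_false, if_false, Pi.add_apply,
      Function.const_apply, Pi.single_eq_same]
    rw [Nat.cast_sub (by omega)]
    push_cast
    linarith
  simp only [hu, ne_eq, not_false_eq_true, if_true, Pi.add_apply, Function.const_apply,
    Pi.single_eq_of_ne hu]
  rcases le_or_gt (u : ℕ) r with hur | hru
  · rw [degree_of_le (by omega) (Fin.val_ne_zero_iff.mpr hu) hur]
    linarith
  · rw [degree_of_lt hru, Nat.cast_sub (by omega), Nat.cast_sub (by omega)]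
    push_cast
    linarith

end oneJoin

/-- For `2 ≤ r ≤ n - 3`, the spectral radius of `K₁ ∇ (K_r ∪ K_{n-1-r})` is strictly
less than `n - 2`. -/
theorem stmt9 (n r : ℕ) (hr : 2 ≤ r) (hrn : r + 3 ≤ n) :
    specRad (oneJoin n r) < (n : ℝ) - 2 := by
  have : NeZero n := ⟨by omega⟩
  exact specRad_lt_of_adjMatrix_mulVec_lt _ oneJoin.weight_pos
    (oneJoin.adjMatrix_mulVec_lt hr hrn)
end

section
/- Let G be a graph on n vertices whose complement has at most n − 2 edges, let S ⊆ V(G) and x₀ ∉ S, and suppose G − (S ∪ {x₀}) has q ≥ 2 connected components each of size at least 2. Then d_{G−S}(x₀) ≥ q(n − |S| − 1) − n + 2. -/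
/-!
Let `W = V ∖ (S ∪ {x₀})`, `m = |W|` and `d = d_{G-S}(x₀)`. Every vertex of `W` is non-adjacent to
the at least `2(q - 1)` vertices of the other components of `G[W]`, so the complement of `G[W]`
has at least `(q - 1) m` edges. These are disjoint from the `m - d` complement edges joining `x₀`
to `W`, hence `(q - 1) m + m - d ≤ n - 2`.
-/

open scoped Classical

open Finset SimpleGraph

namespace SimpleGraph

lemma induce_compl {V : Type*} (G : SimpleGraph V) (s : Set V) :
    Gᶜ.induce s = (G.induce s)ᶜ := by
  ext u v
  simp [Subtype.ext_iff]

lemma card_edgeFinset_induce_add_degree_le {V : Type*} [Fintype V] [DecidableEq V]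
    (G : SimpleGraph V) [DecidableRel G.Adj] {s : Set V} [DecidablePred (· ∈ s)] {x : V}
    (hx : x ∉ s) : #(G.induce s).edgeFinset + G.degree x ≤ #G.edgeFinset := by
  have hinduce : #(G.induce s).edgeFinset = #(G.edgeFinset ∩ s.toFinset.sym2) := by
    rw [← map_edgeFinset_induce, card_map]
  have hdisj : Disjoint (G.edgeFinset ∩ s.toFinset.sym2) (G.incidenceFinset x) := by
    rw [Finset.disjoint_left]
    intro e he hxe
    apply hx
    simpa using mem_sym2_iff.mp (mem_inter.mp he).2 x ((G.mem_incidenceFinset x e).mp hxe).2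
  rw [hinduce, ← card_incidenceFinset_eq_degree, ← card_union_of_disjoint hdisj]
  exact card_le_card (union_subset inter_subset_left (G.incidenceFinset_subset x))

section

variable {V : Type*} [Fintype V] [DecidableEq V] {H : SimpleGraph V} [DecidableRel H.Adj]
  {k : ℕ}

lemma ConnectedComponent.ncard_supp_eq_card_filter (c : H.ConnectedComponent) :
    c.supp.ncard = #{v | H.connectedComponentMk v = c} := by
  rw [Set.ncard_eq_toFinset_card']
  congr 1
  ext v
  simp [ConnectedComponent.mem_supp_iff]

lemma mul_card_connectedComponent_sub_one_le_degree_compl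
    (hk : ∀ c : H.ConnectedComponent, k ≤ c.supp.ncard) (v : V) :
    k * (Nat.card H.ConnectedComponent - 1) ≤ Hᶜ.degree v := by
  set c := H.connectedComponentMk v
  have hother : ({w | H.connectedComponentMk w ≠ c} : Finset V) ⊆ Hᶜ.neighborFinset v := by
    intro w hw
    rw [mem_filter] at hw
    rw [mem_neighborFinset, compl_adj]
    exact ⟨fun h => hw.2 (h ▸ rfl),
      fun h => hw.2 (ConnectedComponent.connectedComponentMk_eq_of_adj h).symm⟩
  calc k * (Nat.card H.ConnectedComponent - 1) = ∑ _c' ∈ univ.erase c, k := by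
        rw [sum_const, card_erase_of_mem (mem_univ c), card_univ, Nat.card_eq_fintype_card,
          smul_eq_mul, mul_comm]
    _ ≤ ∑ c' ∈ univ.erase c, #{w | H.connectedComponentMk w = c'} :=
        sum_le_sum fun c' _ => (hk c').trans_eq c'.ncard_supp_eq_card_filter
    _ = #{w | H.connectedComponentMk w ≠ c} := by
        rw [card_eq_sum_card_fiberwise (f := H.connectedComponentMk) (t := univ.erase c)]
        · refine sum_congr rfl fun c' hc' => ?_
          rw [filter_filter]
          congr 1
          ext w
          simp only [mem_filter, mem_univ, true_and]
          exact ⟨fun h => ⟨h ▸ (mem_erase.mp hc').1, h⟩, And.right⟩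
        · intro w hw
          simpa using hw
    _ ≤ Hᶜ.degree v := card_le_card hother

lemma mul_card_connectedComponent_sub_one_mul_card_le_card_edgeFinset_compl
    (hk : ∀ c : H.ConnectedComponent, k ≤ c.supp.ncard) :
    k * (Nat.card H.ConnectedComponent - 1) * Fintype.card V ≤ 2 * #Hᶜ.edgeFinset := by
  rw [← sum_degrees_eq_twice_card_edges, mul_comm, ← smul_eq_mul, ← card_univ, ← sum_const]
  exact sum_le_sum fun v _ => mul_card_connectedComponent_sub_one_le_degree_compl hk v

end

lemma ncard_le_ncard_neighborSet_compl_add {V : Type*} [Finite V] (G : SimpleGraph V)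
    {s : Set V} {x : V} (hx : x ∉ s) :
    s.ncard ≤ (Gᶜ.neighborSet x).ncard + (s ∩ G.neighborSet x).ncard := by
  have hmissing : s \ G.neighborSet x ⊆ Gᶜ.neighborSet x := by
    rintro w ⟨hw, hnadj⟩
    exact ⟨fun h => hx (h ▸ hw), hnadj⟩
  rw [← Set.ncard_inter_add_ncard_sdiff_eq_ncard s (G.neighborSet x), add_comm]
  exact Nat.add_le_add_right (Set.ncard_le_ncard hmissing) _

lemma mul_card_connectedComponent_induce_add_le_ncard_edgeSet_compl {V : Type*} [Finite V]
    (G : SimpleGraph V) {s : Set V} {x : V} (hx : x ∉ s) {k : ℕ}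
    (hk : ∀ c : (G.induce s).ConnectedComponent, k ≤ c.supp.ncard) :
    k * (Nat.card (G.induce s).ConnectedComponent - 1) * s.ncard
      + 2 * (Gᶜ.neighborSet x).ncard ≤ 2 * Gᶜ.edgeSet.ncard := by
  cases nonempty_fintype V
  have hcross : k * (Nat.card (G.induce s).ConnectedComponent - 1) * s.ncard
      ≤ 2 * (Gᶜ.induce s).edgeSet.ncard := by
    rw [induce_compl, ← coe_edgeFinset, Set.ncard_coe_finset, ← Nat.card_coe_set_eq,
      Nat.card_eq_fintype_card (α := s)]
    exact mul_card_connectedComponent_sub_one_mul_card_le_card_edgeFinset_compl hk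
  have hedges : (Gᶜ.induce s).edgeSet.ncard + (Gᶜ.neighborSet x).ncard
      ≤ Gᶜ.edgeSet.ncard := by
    rw [← coe_edgeFinset, Set.ncard_coe_finset, ← coe_edgeFinset, Set.ncard_coe_finset,
      ← Nat.card_coe_set_eq, Nat.card_eq_fintype_card, card_neighborSet_eq_degree]
    exact Gᶜ.card_edgeFinset_induce_add_degree_le hx
  omega

end SimpleGraph

/-- If the complement of `G` has at most `n - 2` edges, `x₀ ∉ S`, and
`G - (S ∪ {x₀})` has `q ≥ 2` connected components each with at least two vertices,
then `d_{G-S}(x₀) ≥ q(n - |S| - 1) - n + 2`. -/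
theorem stmt14 {n : ℕ} (G : SimpleGraph (Fin n))
    (hcompl : Gᶜ.edgeSet.ncard ≤ n - 2)
    (S : Finset (Fin n)) (x₀ : Fin n) (hx₀ : x₀ ∉ S)
    (hq : 2 ≤ Nat.card (G.induce ((↑S ∪ {x₀} : Set (Fin n))ᶜ)).ConnectedComponent)
    (hsize : ∀ c : (G.induce ((↑S ∪ {x₀} : Set (Fin n))ᶜ)).ConnectedComponent,
      2 ≤ c.supp.ncard) :
    (Nat.card (G.induce ((↑S ∪ {x₀} : Set (Fin n))ᶜ)).ConnectedComponent : ℤ)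
        * ((n : ℤ) - S.card - 1) - n + 2
      ≤ ((G.neighborSet x₀ \ ↑S).ncard : ℤ) := by
  set W : Set (Fin n) := (↑S ∪ {x₀} : Set (Fin n))ᶜ
  have hx₀W : x₀ ∉ W := by simp [W]
  have hedges := G.mul_card_connectedComponent_induce_add_le_ncard_edgeSet_compl hx₀W hsize
  have hmissing := G.ncard_le_ncard_neighborSet_compl_add hx₀W
  have hdegW : G.neighborSet x₀ \ ↑S = W ∩ G.neighborSet x₀ := by
    ext w
    simp only [W, Set.mem_sdiff, Set.mem_inter_iff, mem_neighborSet, Set.mem_compl_iff,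
      Set.mem_union, Finset.mem_coe, Set.mem_singleton_iff, not_or]
    exact ⟨fun ⟨hadj, hS⟩ => ⟨⟨hS, hadj.ne.symm⟩, hadj⟩, fun ⟨⟨hS, _⟩, hadj⟩ => ⟨hadj, hS⟩⟩
  have hW : W.ncard + S.card + 1 = n := by
    have hcoe : (↑S ∪ {x₀} : Set (Fin n)) = ↑(insert x₀ S) := by
      rw [Finset.coe_insert, Set.insert_eq, Set.union_comm]
    have := Set.ncard_compl_add_ncard (↑(insert x₀ S) : Set (Fin n))
    rw [Set.ncard_coe_finset, card_insert_of_notMem hx₀, Nat.card_eq_fintype_card,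
      Fintype.card_fin, ← add_assoc, ← hcoe] at this
    exact this
  have hW2 : 2 ≤ W.ncard := by
    obtain ⟨⟨c⟩, -⟩ := Nat.card_pos_iff.mp (zero_lt_two.trans_le hq)
    exact (hsize c).trans ((Set.ncard_le_card _).trans_eq (Nat.card_coe_set_eq W))
  have hn : 2 ≤ n := by omega
  rw [hdegW]
  zify [hq.trans' one_le_two, hn] at hcompl hedges hmissing hW
  nlinarith
end
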